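/- arXiv:1304.4659 — 2 statements merged into one kernel-verified Lean document; each statement's English description precedes it below -/
import Mathlib

section
/- The operation J(x,y,z) defined by J(x,y,z) = x if x = y, J(x,y,z) = x ∧ z if x = ∂y, and 0 otherwise, is monotone with respect to the height-1 order: if (a₁,a₂,a₃) ≤ (b₁,b₂,b₃) coordinatewise then J(a₁,a₂,a₃) ≤ J(b₁,b₂,b₃). -/
open Classical in
/-- Height-1 meet with bottom `z`. -/
noncomputable def smeet {A : Type*} (z : A) (x y : A) : A := if x = y then x else z

/-- Height-1 order: `x ≤ y` iff `x ∈ {0, y}`. -/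
def sle {A : Type*} (z : A) (x y : A) : Prop := x = z ∨ x = y

open Classical in
/-- `J(x,y,w) = x` if `x = y`; `x ∧ w` if `x = ∂y` (for `x, y` in the domain `S` of `∂`);
`0` otherwise. -/
noncomputable def Jop {A : Type*} (z : A) (S : Set A) (pd : A → A) (x y w : A) : A :=
  if x = y then x else if x ∈ S ∧ y ∈ S ∧ x = pd y then smeet z x w else z

/-- The operation `J` is monotone with respect to the height-1 order: if
`(a₁,a₂,a₃) ≤ (b₁,b₂,b₃)` coordinatewise then `J(a₁,a₂,a₃) ≤ J(b₁,b₂,b₃)`.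
Here `S` is a subset of `A` closed under the fixed-point-free involution `∂` (`pd`),
with `0 ∉ S`. -/
theorem Jop_monotone {A : Type*} (z : A) (S : Set A) (pd : A → A)
    (hz : z ∉ S)
    (hclosed : ∀ x ∈ S, pd x ∈ S)
    (hinv : ∀ x ∈ S, pd (pd x) = x)
    (hfpf : ∀ x ∈ S, pd x ≠ x)
    (a₁ a₂ a₃ b₁ b₂ b₃ : A)
    (h1 : sle z a₁ b₁) (h2 : sle z a₂ b₂) (h3 : sle z a₃ b₃) :
    sle z (Jop z S pd a₁ a₂ a₃) (Jop z S pd b₁ b₂ b₃) := by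
  rcases h1 with h1 | h1 <;> rcases h2 with h2 | h2 <;> rcases h3 with h3 | h3 <;>
    subst h1 <;> subst h2 <;> subst h3 <;>
    simp only [sle, Jop, smeet] <;> split_ifs <;> tauto
end

section
/- A finite algebra A possessing a fundamental binary operation ∧ such that ⟨A; ∧⟩ is a semilattice generates a congruence ∧-semidistributive variety; in particular, the congruence lattice of every algebra having a compatible semilattice operation satisfies the meet-semidistributive law: α ∧ β = α ∧ γ implies α ∧ β = α ∧ (β ∨ γ). -/
open FirstOrder FirstOrder.Language

/-- A congruence of an `L`-structure `B`: an equivalence relation compatible with all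
function symbols. -/
def IsCong (L : Language) (B : Type*) [L.Structure B] (θ : B → B → Prop) : Prop :=
  Equivalence θ ∧ ∀ {k : ℕ} (f : L.Functions k) (x y : Fin k → B),
    (∀ i, θ (x i) (y i)) → θ (Structure.funMap f x) (Structure.funMap f y)

/-- The join of two congruences: the smallest congruence containing both. -/
def CongJoin (L : Language) (B : Type*) [L.Structure B] (β γ : B → B → Prop)
    (x y : B) : Prop :=
  ∀ θ : B → B → Prop, IsCong L B θ → (∀ u v, β u v → θ u v) → (∀ u v, γ u v → θ u v) → θ x y

section AuxSD

variable {L : Language} {B : Type*} [L.Structure B]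

/-- The binary meet operation on `B` induced by the function symbol `m`. -/
def mB (m : L.Functions 2) (x y : B) : B := Structure.funMap m ![x, y]

lemma realize_func2 {m : L.Functions 2} (v : ℕ → B) (s t : L.Term ℕ) :
    Term.realize v (Term.func m ![s, t]) =
      Structure.funMap m ![Term.realize v s, Term.realize v t] := by
  simp only [Term.realize]
  congr
  funext i
  fin_cases i <;> rfl

lemma cong_mB {m : L.Functions 2} {θ : B → B → Prop} (hθ : IsCong L B θ)
    {u v u' v' : B} (h1 : θ u u') (h2 : θ v v') : θ (mB m u v) (mB m u' v') := by
  have := hθ.2 m ![u, v] ![u', v'] (fun i => by fin_cases i <;> assumption)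
  simpa [mB] using this

/-- one-coordinate compatibility for the reflexive-transitive closure of the union of
two congruences -/
lemma chain_update {β γ : B → B → Prop} (hβ : IsCong L B β) (hγ : IsCong L B γ)
    {k : ℕ} (f : L.Functions k) (x : Fin k → B) (i : Fin k) {u v : B}
    (hc : Relation.ReflTransGen (fun a b => β a b ∨ γ a b) u v) :
    Relation.ReflTransGen (fun a b => β a b ∨ γ a b)
      (Structure.funMap f (Function.update x i u))
      (Structure.funMap f (Function.update x i v)) := by
  induction hc with
  | refl => exact Relation.ReflTransGen.refl
  | tail _ hstep ih =>
    refine ih.tail ?_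
    rcases hstep with hb | hg
    · refine Or.inl (hβ.2 f _ _ (fun j => ?_))
      by_cases hj : j = i
      · subst hj; simpa using hb
      · simp only [Function.update_of_ne hj]; exact hβ.1.refl _
    · refine Or.inr (hγ.2 f _ _ (fun j => ?_))
      by_cases hj : j = i
      · subst hj; simpa using hg
      · simp only [Function.update_of_ne hj]; exact hγ.1.refl _

/-- The reflexive-transitive closure of the union of two congruences is a congruence. -/
lemma chain_isCong {β γ : B → B → Prop} (hβ : IsCong L B β) (hγ : IsCong L B γ) :
    IsCong L B (Relation.ReflTransGen (fun a b => β a b ∨ γ a b)) := by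
  set R : B → B → Prop := fun a b => β a b ∨ γ a b with hR
  have hRsymm : ∀ a b, R a b → R b a := by
    rintro a b (hb | hg)
    · exact Or.inl (hβ.1.symm hb)
    · exact Or.inr (hγ.1.symm hg)
  constructor
  · refine ⟨fun a => Relation.ReflTransGen.refl, ?_, fun h1 h2 => h1.trans h2⟩
    · intro a b hab
      induction hab with
      | refl => exact Relation.ReflTransGen.refl
      | tail _ hstep ih => exact Relation.ReflTransGen.head (hRsymm _ _ hstep) ih
  · intro k f x y hxy
    -- interpolate one coordinate at a time
    have key : ∀ j : ℕ,
        Relation.ReflTransGen R (Structure.funMap f x)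
          (Structure.funMap f (fun i => if (i : ℕ) < j then y i else x i)) := by
      intro j
      induction j with
      | zero =>
        have : (fun i : Fin k => if (i : ℕ) < 0 then y i else x i) = x := by
          funext i; simp
        rw [this]
      | succ j ih =>
        by_cases hj : j < k
        · refine ih.trans ?_
          have heq1 : (fun i : Fin k => if (i : ℕ) < j then y i else x i) =
              Function.update (fun i : Fin k => if (i : ℕ) < j then y i else x i)
                ⟨j, hj⟩ (x ⟨j, hj⟩) := by
            funext i
            by_cases hij : i = ⟨j, hj⟩
            · subst hij; simp
            · simp [Function.update_of_ne hij]
          have heq2 : (fun i : Fin k => if (i : ℕ) < j + 1 then y i else x i) =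
              Function.update (fun i : Fin k => if (i : ℕ) < j then y i else x i)
                ⟨j, hj⟩ (y ⟨j, hj⟩) := by
            funext i
            by_cases hij : i = ⟨j, hj⟩
            · subst hij; simp
            · have : (i : ℕ) ≠ j := fun hc => hij (Fin.ext hc)
              simp only [Function.update_of_ne hij]
              have : ((i : ℕ) < j + 1 ↔ (i : ℕ) < j) := by omega
              simp [this]
          rw [heq1, heq2]
          exact chain_update hβ hγ f _ ⟨j, hj⟩ (hxy ⟨j, hj⟩)
        · have : (fun i : Fin k => if (i : ℕ) < j + 1 then y i else x i) =
              (fun i : Fin k => if (i : ℕ) < j then y i else x i) := by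
            funext i
            have h1 : (i : ℕ) < j + 1 := by omega
            have h2 : (i : ℕ) < j := by omega
            simp [h1, h2]
          rw [this]; exact ih
    have := key k
    have heq : (fun i : Fin k => if (i : ℕ) < k then y i else x i) = y := by
      funext i; simp [i.isLt]
    rwa [heq] at this

end AuxSD

/-- A finite algebra `A` with a fundamental binary operation `∧` making `⟨A; ∧⟩` a semilattice
generates a congruence `∧`-semidistributive variety: the congruence lattice of every algebra
`B` satisfying all identities of `A` (i.e. every member of `V(A)`) satisfies the
meet-semidistributive law `α ∧ β = α ∧ γ → α ∧ β = α ∧ (β ∨ γ)`. -/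
theorem semilattice_algebra_generates_SD_meet_variety
    {L : Language} (A : Type*) [Finite A] [L.Structure A]
    (m : L.Functions 2)
    (hassoc : ∀ x y z : A,
      Structure.funMap m ![Structure.funMap m ![x, y], z] =
      Structure.funMap m ![x, Structure.funMap m ![y, z] ])
    (hcomm : ∀ x y : A, Structure.funMap m ![x, y] = Structure.funMap m ![y, x])
    (hidem : ∀ x : A, Structure.funMap m ![x, x] = x)
    (B : Type*) [L.Structure B]
    (hvar : ∀ t₁ t₂ : L.Term ℕ,
      (∀ v : ℕ → A, t₁.realize v = t₂.realize v) → ∀ v : ℕ → B, t₁.realize v = t₂.realize v)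
    (α β γ : B → B → Prop)
    (hα : IsCong L B α) (hβ : IsCong L B β) (hγ : IsCong L B γ)
    (h : ∀ x y : B, (α x y ∧ β x y) ↔ (α x y ∧ γ x y)) :
    ∀ x y : B, (α x y ∧ β x y) ↔ (α x y ∧ CongJoin L B β γ x y) := by
  -- transfer the semilattice identities to B
  have hidemB : ∀ x : B, mB m x x = x := by
    intro x
    have := hvar (Term.func m ![Term.var 0, Term.var 0]) (Term.var 0)
      (fun v => by rw [realize_func2]; exact hidem (v 0)) (fun _ => x)
    rw [realize_func2] at this
    exact this
  have hcommB : ∀ x y : B, mB m x y = mB m y x := by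
    intro x y
    have := hvar (Term.func m ![Term.var 0, Term.var 1])
      (Term.func m ![Term.var 1, Term.var 0])
      (fun v => by rw [realize_func2, realize_func2]; exact hcomm (v 0) (v 1))
      (fun n => if n = 0 then x else y)
    rw [realize_func2, realize_func2] at this
    simpa [mB] using this
  have hassocB : ∀ x y z : B, mB m (mB m x y) z = mB m x (mB m y z) := by
    intro x y z
    have := hvar (Term.func m ![Term.func m ![Term.var 0, Term.var 1], Term.var 2])
      (Term.func m ![Term.var 0, Term.func m ![Term.var 1, Term.var 2] ])
      (fun v => by rw [realize_func2, realize_func2, realize_func2, realize_func2]; exact hassoc (v 0) (v 1) (v 2))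
      (fun n => if n = 0 then x else if n = 1 then y else z)
    rw [realize_func2, realize_func2, realize_func2, realize_func2] at this
    simpa [mB] using this
  -- the congruence δ = α ∩ β = α ∩ γ
  set δ : B → B → Prop := fun u v => α u v ∧ β u v with hδ
  have hδβ : ∀ u v, δ u v → β u v := fun u v hd => hd.2
  have hδγ : ∀ u v, δ u v → γ u v := fun u v hd => ((h u v).1 hd).2
  set R : B → B → Prop := fun a b => β a b ∨ γ a b with hR
  set C : B → B → Prop := Relation.ReflTransGen R with hC
  have hCcong : IsCong L B C := chain_isCong hβ hγ
  -- the decreasing-step relation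
  set D : B → B → Prop := fun u v => R u v ∧ mB m u v = u with hD
  -- from a chain, produce a decreasing chain ending at the same point,
  -- whose start is below the original start
  have lemQ : ∀ u v : B, C u v →
      ∃ w : B, Relation.ReflTransGen D w v ∧ mB m u w = w := by
    intro u v huv
    induction huv using Relation.ReflTransGen.head_induction_on with
    | refl => exact ⟨v, Relation.ReflTransGen.refl, hidemB v⟩
    | head hstep _ ih =>
      rename_i u u' _
      obtain ⟨w', hchain, hww'⟩ := ih
      refine ⟨mB m u w', Relation.ReflTransGen.head ?_ hchain, ?_⟩
      · constructor
        · -- R (mB m u w') w' : from R u u', meet with w'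
          have : R (mB m u w') (mB m u' w') := by
            rcases hstep with hb | hg
            · exact Or.inl (cong_mB hβ hb (hβ.1.refl w'))
            · exact Or.inr (cong_mB hγ hg (hγ.1.refl w'))
          rwa [hww'] at this
        · -- mB m (mB m u w') w' = mB m u w'
          rw [hassocB, hidemB]
      · -- mB m u (mB m u w') = mB m u w'
        rw [← hassocB, hidemB]
  -- the main induction along a decreasing chain
  have lemInd : ∀ a b : B, α a b → ∀ w v : B, Relation.ReflTransGen D w v →
      mB m v b = v → δ w (mB m a w) → δ v (mB m a v) := by
    intro a b hab w v hchain
    induction hchain with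
    | refl => exact fun _ hw => hw
    | tail hwc hcv ih =>
      rename_i c v
      intro hvb hbase
      -- c ≤ v ≤ b so c ≤ b
      have hcv' : mB m c v = c := hcv.2
      have hcb : mB m c b = c := by
        rw [← hcv', hassocB, hvb]
      have IH : δ c (mB m a c) := ih hcb hbase
      -- α v (mB m a v) : since α a b, and mB m b v = v
      have hbv : mB m b v = v := by rw [hcommB]; exact hvb
      have hαv : α v (mB m a v) := by
        have : α (mB m b v) (mB m a v) := cong_mB hα (hα.1.symm hab) (hα.1.refl v)
        rwa [hbv] at this
      -- case on whether the step c—v is a β-step or a γ-step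
      have step : ∀ ρ : B → B → Prop, IsCong L B ρ → ρ c v →
          (∀ p q, δ p q → ρ p q) → (∀ p q, α p q → ρ p q → δ p q) → δ v (mB m a v) := by
        intro ρ hρ hcvρ hδρ hρδ
        have h1 : ρ v c := hρ.1.symm hcvρ
        have h2 : ρ c (mB m a c) := hδρ _ _ IH
        have h3 : ρ v (mB m a c) := hρ.1.trans h1 h2
        have h4 : ρ (mB m a v) (mB m a c) := by
          have := cong_mB (m := m) hρ (hρ.1.refl a) h1
          exact this
        have h5 : ρ v (mB m a v) := hρ.1.trans h3 (hρ.1.symm h4)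
        exact hρδ _ _ hαv h5
      rcases hcv.1 with hb | hg
      · exact step β hβ hb hδβ (fun p q h1 h2 => ⟨h1, h2⟩)
      · exact step γ hγ hg hδγ (fun p q h1 h2 => (h p q).2 ⟨h1, h2⟩)
  -- assemble
  intro x y
  constructor
  · rintro ⟨hxy, hbxy⟩
    exact ⟨hxy, fun θ hθ hbθ _ => hbθ x y hbxy⟩
  · rintro ⟨hxy, hjoin⟩
    refine ⟨hxy, ?_⟩
    have hCxy : C x y := hjoin C hCcong
      (fun u v huv => Relation.ReflTransGen.single (Or.inl huv))
      (fun u v huv => Relation.ReflTransGen.single (Or.inr huv))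
    have hCyx : C y x := hCcong.1.symm hCxy
    -- δ y (mB m x y)
    obtain ⟨w, hchain, hxw⟩ := lemQ x y hCxy
    have h1 : δ y (mB m x y) := by
      refine lemInd x y hxy w y hchain (hidemB y) ?_
      rw [hxw]; exact ⟨hα.1.refl w, hβ.1.refl w⟩
    -- δ x (mB m y x)
    obtain ⟨w', hchain', hyw'⟩ := lemQ y x hCyx
    have h2 : δ x (mB m y x) := by
      refine lemInd y x (hα.1.symm hxy) w' x hchain' (hidemB x) ?_
      rw [hyw']; exact ⟨hα.1.refl w', hβ.1.refl w'⟩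
    rw [hcommB] at h2
    have h3 : δ x y := ⟨hα.1.trans h2.1 (hα.1.symm h1.1), hβ.1.trans h2.2 (hβ.1.symm h1.2)⟩
    exact h3.2
end
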